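/- Let α be a type, let ℓ, s, t be natural numbers with s ≤ t, and let p ∈ [0, 1] be a real number. Let A be a random finite sequence over α (a random variable on a probability space taking values in finite sequences of elements of α) such that for every integer k with s ≤ k ≤ t, with probability at least p the access graph of A has a k-partition each of whose parts contains at least ℓ/k edges (i.e., k · |E(b_i, m_i, b_{i+1})| ≥ ℓ for every part). Then the expected length of A is at least (p·ℓ/2) · (⌊log_4 t⌋ − ⌈log_4 s⌉). -/

import Mathlib

/-
Go through the levels `k = 4^j`, `⌈log₄ s⌉ ≤ j < ⌊log₄ t⌋`, in increasing order, collecting the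
midpoints `m_i` of the good partitions met so far; before level `j` there are fewer than `4^j / 3`
of them. Each lies strictly inside at most one part of a `4^j`-partition, and no edge of a part
free of old midpoints is separated by one. So the free parts, at least two thirds of all, carry at
least `ℓ/2` new edges, each separated by a new midpoint. An access graph on `N` vertices has at most
`N` edges (each vertex is the left end of at most one edge), so an outcome with good partitions at
`r` of these levels has length at least `rℓ/2`; taking expectations gives the bound.
-/

/-- `E(a, m, b)`: the set of edges `(u, v) ∈ E` with `a ≤ u < m` and `m ≤ v < b`. -/
def edgesBetween (E : Finset (ℕ × ℕ)) (a m b : ℕ) : Finset (ℕ × ℕ) :=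
  E.filter fun e => a ≤ e.1 ∧ e.1 < m ∧ m ≤ e.2 ∧ e.2 < b

/-- A `k`-partition of an ordered graph on `{0, ..., N-1}`: a sequence
`0 = b_0 ≤ m_0 ≤ b_1 ≤ m_1 ≤ ⋯ ≤ m_{k-1} ≤ b_k = N`. -/
def IsPartition (N k : ℕ) (b m : ℕ → ℕ) : Prop :=
  b 0 = 0 ∧ b k = N ∧ ∀ i < k, b i ≤ m i ∧ m i ≤ b (i + 1)

/-- The access graph of a finite sequence given as a list `l = a_0, ..., a_{N-1}`:
the ordered graph on vertex set `{0, ..., N-1}` (with `N = l.length`) whose edges are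
pairs `(i, j)` with `i < j`, `a_i = a_j`, and `a_k ≠ a_i` for all `i < k < j`. -/
def listAccessGraph {α : Type*} [DecidableEq α] (l : List α) : Finset (ℕ × ℕ) :=
  (Finset.range l.length ×ˢ Finset.range l.length).filter fun e =>
    e.1 < e.2 ∧ l[e.1]? = l[e.2]? ∧ ∀ k, k < e.2 → e.1 < k → l[k]? ≠ l[e.1]?

open Finset MeasureTheory Real

def HasGoodPartition (E : Finset (ℕ × ℕ)) (N k L : ℕ) : Prop :=
  ∃ b m : ℕ → ℕ, IsPartition N k b m ∧ ∀ i < k, L ≤ k * #(edgesBetween E (b i) (m i) (b (i + 1)))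

def Separates (μ : ℕ) (e : ℕ × ℕ) : Prop :=
  e.1 < μ ∧ μ ≤ e.2

theorem mem_edgesBetween {E : Finset (ℕ × ℕ)} {a m b : ℕ} {e : ℕ × ℕ} :
    e ∈ edgesBetween E a m b ↔ e ∈ E ∧ a ≤ e.1 ∧ e.1 < m ∧ m ≤ e.2 ∧ e.2 < b := by
  simp [edgesBetween]

theorem card_listAccessGraph_le {α : Type*} [DecidableEq α] (l : List α) :
    #(listAccessGraph l) ≤ l.length := by
  have hmem : ∀ e ∈ listAccessGraph l, e.1 < l.length ∧ e.1 < e.2 ∧ l[e.1]? = l[e.2]? ∧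
      ∀ k, k < e.2 → e.1 < k → l[k]? ≠ l[e.1]? := by
    intro e he
    simp only [listAccessGraph, mem_filter, mem_product, mem_range] at he
    exact ⟨he.1.1, he.2⟩
  -- the right end of an edge is the next occurrence of the value at its left end
  have hinj : Set.InjOn Prod.fst (listAccessGraph l : Set (ℕ × ℕ)) := by
    intro e he e' he' h
    obtain ⟨-, hlt, heq, hmin⟩ := hmem e he
    obtain ⟨-, hlt', heq', hmin'⟩ := hmem e' he'
    rcases lt_trichotomy e.2 e'.2 with hc | hc | hc
    · exact absurd (h ▸ heq.symm) (hmin' e.2 hc (by omega))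
    · exact Prod.ext h hc
    · exact absurd (h ▸ heq'.symm) (hmin e'.2 hc (by omega))
  simpa using card_le_card_of_injOn Prod.fst (fun e he => mem_range.mpr (hmem e he).1) hinj

namespace IsPartition

variable {N k : ℕ} {b m : ℕ → ℕ}

theorem le_of_le (h : IsPartition N k b m) {i j : ℕ} (hij : i ≤ j) (hj : j ≤ k) : b i ≤ b j := by
  induction j, hij using Nat.le_induction with
  | base => rfl
  | succ j _ ih =>
    have hstep := h.2.2 j (by omega)
    exact (ih (by omega)).trans (hstep.1.trans hstep.2)

theorem eq_of_mem_Ico (h : IsPartition N k b m) {i j x : ℕ} (hi : i < k) (hj : j < k)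
    (hxi : x ∈ Set.Ico (b i) (b (i + 1))) (hxj : x ∈ Set.Ico (b j) (b (j + 1))) : i = j := by
  rw [Set.mem_Ico] at hxi hxj
  by_contra hne
  rcases Nat.lt_or_gt_of_ne hne with hlt | hlt
  · have := h.le_of_le (show i + 1 ≤ j by omega) hj.le
    omega
  · have := h.le_of_le (show j + 1 ≤ i by omega) hi.le
    omega

theorem card_filter_exists_mem_Ioo_le (h : IsPartition N k b m) (P : Finset ℕ) :
    #{i ∈ range k | ∃ μ ∈ P, μ ∈ Set.Ioo (b i) (b (i + 1))} ≤ #P := by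
  refine card_le_card_of_forall_subsingleton (fun i μ => μ ∈ Set.Ioo (b i) (b (i + 1)))
    (fun i hi => (mem_filter.mp hi).2) fun μ _ i hi j hj => ?_
  exact h.eq_of_mem_Ico (mem_range.mp (mem_filter.mp hi.1).1) (mem_range.mp (mem_filter.mp hj.1).1)
    (Set.Ioo_subset_Ico_self hi.2) (Set.Ioo_subset_Ico_self hj.2)

end IsPartition

theorem exists_subset_separated_not_separated {E : Finset (ℕ × ℕ)} {N k L : ℕ} {b m : ℕ → ℕ}
    (hpart : IsPartition N k b m)
    (hgood : ∀ i < k, L ≤ k * #(edgesBetween E (b i) (m i) (b (i + 1))))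
    {P : Finset ℕ} (hP : 3 * #P < k) :
    ∃ F ⊆ E, L ≤ 2 * #F ∧ (∀ e ∈ F, ∃ i < k, Separates (m i) e) ∧
      ∀ e ∈ F, ∀ μ ∈ P, ¬ Separates μ e := by
  classical
  set D := fun i => edgesBetween E (b i) (m i) (b (i + 1))
  set U := {i ∈ range k | ¬ ∃ μ ∈ P, μ ∈ Set.Ioo (b i) (b (i + 1))}
  have hUk : ∀ i ∈ U, i < k := fun i hi => mem_range.mp (mem_filter.mp hi).1
  have hU : k ≤ 2 * #U := by
    have hsplit := card_filter_add_card_filter_not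
      (s := range k) (p := fun i => ∃ μ ∈ P, μ ∈ Set.Ioo (b i) (b (i + 1)))
    have := hpart.card_filter_exists_mem_Ioo_le P
    rw [card_range] at hsplit
    change _ + #U = k at hsplit
    omega
  have hdisj : (U : Set ℕ).PairwiseDisjoint D := by
    intro i hi j hj hne
    refine disjoint_left.mpr fun e hei hej => hne ?_
    obtain ⟨-, hi₁, hi₂, hi₃, hi₄⟩ := mem_edgesBetween.mp hei
    obtain ⟨-, hj₁, hj₂, hj₃, hj₄⟩ := mem_edgesBetween.mp hej
    exact hpart.eq_of_mem_Ico (hUk i hi) (hUk j hj) ⟨hi₁, by omega⟩ ⟨hj₁, by omega⟩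
  have hcount : k * L ≤ k * (2 * #(U.biUnion D)) := by
    rw [card_biUnion hdisj]
    calc k * L ≤ 2 * #U * L := Nat.mul_le_mul_right L hU
      _ = 2 * ∑ _i ∈ U, L := by rw [sum_const, smul_eq_mul, mul_assoc]
      _ ≤ 2 * ∑ i ∈ U, k * #(D i) :=
        Nat.mul_le_mul_left 2 (sum_le_sum fun i hi => hgood i (hUk i hi))
      _ = k * (2 * ∑ i ∈ U, #(D i)) := by rw [← mul_sum]; ring
  refine ⟨U.biUnion D, fun e he => ?_, Nat.le_of_mul_le_mul_left hcount (by omega),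
    fun e he => ?_, fun e he μ hμ ⟨hμ₁, hμ₂⟩ => ?_⟩ <;>
    obtain ⟨i, hi, hei⟩ := mem_biUnion.mp he <;>
    obtain ⟨hE, h₁, h₂, h₃, h₄⟩ := mem_edgesBetween.mp hei
  · exact hE
  · exact ⟨i, hUk i hi, h₂, h₃⟩
  · exact (mem_filter.mp hi).2 ⟨μ, hμ, by omega, by omega⟩

theorem exists_separated_subset_of_hasGoodPartition {E : Finset (ℕ × ℕ)} {N L : ℕ}
    (S : Finset ℕ) (h : ∀ j ∈ S, HasGoodPartition E N (4 ^ j) L) {n : ℕ} (hn : ∀ j ∈ S, j < n) :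
    ∃ C ⊆ E, ∃ P : Finset ℕ, (∀ e ∈ C, ∃ μ ∈ P, Separates μ e) ∧ 3 * #P < 4 ^ n ∧
      #S * L ≤ 2 * #C := by
  classical
  induction S using Finset.induction_on_max generalizing n with
  | empty => exact ⟨∅, empty_subset _, ∅, by simp, by simp, by simp⟩
  | insert a S hlt ih =>
    obtain ⟨C, hC, P, hCP, hP, hSC⟩ :=
      ih (fun j hj => h j (mem_insert_of_mem hj)) hlt
    obtain ⟨b, m, hpart, hgood⟩ := h a (mem_insert_self a S)
    obtain ⟨F, hF, hLF, hFm, hFP⟩ := exists_subset_separated_not_separated hpart hgood hP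
    have ha : a < n := hn a (mem_insert_self a S)
    have haS : a ∉ S := fun haS => lt_irrefl a (hlt a haS)
    have hCF : Disjoint C F := disjoint_left.mpr fun e heC heF => by
      obtain ⟨μ, hμ, hsep⟩ := hCP e heC
      exact hFP e heF μ hμ hsep
    refine ⟨C ∪ F, union_subset hC hF, P ∪ (range (4 ^ a)).image m, fun e he => ?_, ?_, ?_⟩
    · rcases mem_union.mp he with he | he
      · obtain ⟨μ, hμ, hsep⟩ := hCP e he
        exact ⟨μ, mem_union_left _ hμ, hsep⟩
      · obtain ⟨i, hi, hsep⟩ := hFm e he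
        exact ⟨m i, mem_union_right _ (mem_image_of_mem m (mem_range.mpr hi)), hsep⟩
    · have himage := card_image_le (s := range (4 ^ a)) (f := m)
      have hunion := card_union_le P ((range (4 ^ a)).image m)
      have hpow : 4 ^ (a + 1) ≤ 4 ^ n := Nat.pow_le_pow_right (by norm_num) ha
      rw [card_range] at himage
      rw [pow_succ] at hpow
      omega
    · rw [card_insert_of_notMem haS, card_union_of_disjoint hCF, add_mul]
      omega

theorem card_mul_le_two_mul_card_of_hasGoodPartition {E : Finset (ℕ × ℕ)} {N L : ℕ}
    (S : Finset ℕ) (h : ∀ j ∈ S, HasGoodPartition E N (4 ^ j) L) : #S * L ≤ 2 * #E := by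
  obtain ⟨n, hn⟩ := S.exists_nat_subset_range
  obtain ⟨C, hC, -, -, -, hSC⟩ :=
    exists_separated_subset_of_hasGoodPartition S h fun j hj => mem_range.mp (hn hj)
  have := card_le_card hC
  omega

theorem card_mul_le_two_mul_length_of_hasGoodPartition {α : Type*} [DecidableEq α]
    {l : List α} {L : ℕ} (S : Finset ℕ)
    (h : ∀ j ∈ S, HasGoodPartition (listAccessGraph l) l.length (4 ^ j) L) :
    #S * L ≤ 2 * l.length :=
  (card_mul_le_two_mul_card_of_hasGoodPartition S h).trans
    (Nat.mul_le_mul_left 2 (card_listAccessGraph_le l))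

theorem pow_mem_Icc_of_mem_Ico_clog_log {b s t j : ℕ} (hb : 1 < b)
    (hj : j ∈ Ico (Nat.clog b s) (Nat.log b t)) : s ≤ b ^ j ∧ b ^ j ≤ t := by
  obtain ⟨hsj, hjt⟩ := mem_Ico.mp hj
  refine ⟨(Nat.clog_le_iff_le_pow hb).mp hsj, Nat.pow_le_of_le_log ?_ hjt.le⟩
  rintro rfl
  simp at hjt

theorem floor_logb_sub_ceil_logb_le_card_Ico (b s t : ℕ) :
    ((⌊logb b (t : ℝ)⌋ - ⌈logb b (s : ℝ)⌉ : ℤ) : ℝ) ≤ #(Ico (Nat.clog b s) (Nat.log b t)) := by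
  rw [floor_logb_natCast (Nat.cast_nonneg t), ceil_logb_natCast (Nat.cast_nonneg s),
    Int.log_natCast, Int.clog_natCast, Nat.card_Ico]
  exact_mod_cast (by omega : (Nat.log b t : ℤ) - Nat.clog b s ≤ (Nat.log b t - Nat.clog b s : ℕ))

open Classical in
theorem sum_measure_mul_le_lintegral {Ω ι : Type*} [MeasurableSpace Ω] (μ : Measure Ω)
    {J : Finset ι} {G : ι → Set Ω} (hG : ∀ j ∈ J, MeasurableSet (G j)) (c : ENNReal)
    {f : Ω → ENNReal} (hf : ∀ ω, #{j ∈ J | ω ∈ G j} * c ≤ f ω) :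
    ∑ j ∈ J, μ (G j) * c ≤ ∫⁻ ω, f ω ∂μ :=
  calc ∑ j ∈ J, μ (G j) * c = ∑ j ∈ J, ∫⁻ ω, (G j).indicator (fun _ => c) ω ∂μ :=
        sum_congr rfl fun j hj => by rw [lintegral_indicator_const (hG j hj), mul_comm]
    _ = ∫⁻ ω, ∑ j ∈ J, (G j).indicator (fun _ => c) ω ∂μ :=
        (lintegral_finsetSum _ fun j hj => measurable_const.indicator (hG j hj)).symm
    _ ≤ ∫⁻ ω, f ω ∂μ := lintegral_mono fun ω => by
        simpa [Set.indicator_apply, sum_ite, sum_const, nsmul_eq_mul] using hf ω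

theorem stmt_13_general {α : Type*} [DecidableEq α]
    {Ω : Type*} [MeasurableSpace Ω] (μ : Measure Ω)
    (ℓ s t : ℕ) (p : ℝ) (hp0 : 0 ≤ p)
    (A : Ω → List α)
    (hmeas : ∀ k, s ≤ k → k ≤ t → MeasurableSet {ω | ∃ b m : ℕ → ℕ,
      IsPartition (A ω).length k b m ∧
      ∀ i < k, ℓ ≤ k * (edgesBetween (listAccessGraph (A ω)) (b i) (m i) (b (i + 1))).card})
    (hprob : ∀ k, s ≤ k → k ≤ t → ENNReal.ofReal p ≤ μ {ω | ∃ b m : ℕ → ℕ,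
      IsPartition (A ω).length k b m ∧
      ∀ i < k, ℓ ≤ k * (edgesBetween (listAccessGraph (A ω)) (b i) (m i) (b (i + 1))).card}) :
    ENNReal.ofReal (p * ℓ / 2 * ((⌊logb 4 (t : ℝ)⌋ - ⌈logb 4 (s : ℝ)⌉ : ℤ) : ℝ))
      ≤ ∫⁻ ω, ((A ω).length : ENNReal) ∂μ := by
  classical
  set J := Ico (Nat.clog 4 s) (Nat.log 4 t)
  set G := fun j => {ω | HasGoodPartition (listAccessGraph (A ω)) (A ω).length (4 ^ j) ℓ}
  have hJ : ∀ j ∈ J, s ≤ 4 ^ j ∧ 4 ^ j ≤ t := fun j hj =>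
    pow_mem_Icc_of_mem_Ico_clog_log (by norm_num) hj
  have hlength : ∀ ω, #{j ∈ J | ω ∈ G j} * ENNReal.ofReal (ℓ / 2) ≤ (A ω).length := fun ω => by
    have hcount : (#{j ∈ J | ω ∈ G j} * ℓ : ℝ) ≤ 2 * (A ω).length := by
      exact_mod_cast card_mul_le_two_mul_length_of_hasGoodPartition _
        fun j hj => (mem_filter.mp hj).2
    rw [← ENNReal.ofReal_natCast, ← ENNReal.ofReal_mul (by positivity), ← ENNReal.ofReal_natCast]
    exact ENNReal.ofReal_le_ofReal (by linarith)
  calc ENNReal.ofReal (p * ℓ / 2 * ((⌊logb 4 (t : ℝ)⌋ - ⌈logb 4 (s : ℝ)⌉ : ℤ) : ℝ))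
      ≤ ENNReal.ofReal (#J * (p * (ℓ / 2))) := by
        have hlevels := floor_logb_sub_ceil_logb_le_card_Ico 4 s t
        rw [Nat.cast_ofNat] at hlevels
        have := mul_le_mul_of_nonneg_left hlevels (by positivity : 0 ≤ p * (ℓ / 2))
        exact ENNReal.ofReal_le_ofReal (by linarith)
    _ = ∑ j ∈ J, ENNReal.ofReal p * ENNReal.ofReal (ℓ / 2) := by
        rw [sum_const, nsmul_eq_mul, ENNReal.ofReal_mul (by positivity), ENNReal.ofReal_natCast,
          ENNReal.ofReal_mul hp0]
    _ ≤ ∑ j ∈ J, μ (G j) * ENNReal.ofReal (ℓ / 2) := by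
        gcongr with j hj
        exact hprob _ (hJ j hj).1 (hJ j hj).2
    _ ≤ ∫⁻ ω, ((A ω).length : ENNReal) ∂μ :=
        sum_measure_mul_le_lintegral μ (fun j hj => hmeas _ (hJ j hj).1 (hJ j hj).2) _ hlength

open MeasureTheory Real in
theorem stmt_13 {α : Type*} [DecidableEq α]
    {Ω : Type*} [MeasurableSpace Ω] (μ : Measure Ω) [IsProbabilityMeasure μ]
    (ℓ s t : ℕ) (hst : s ≤ t) (p : ℝ) (hp0 : 0 ≤ p) (hp1 : p ≤ 1)
    (A : Ω → List α)
    (hmeas : ∀ k, s ≤ k → k ≤ t → MeasurableSet {ω | ∃ b m : ℕ → ℕ,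
      IsPartition (A ω).length k b m ∧
      ∀ i < k, ℓ ≤ k * (edgesBetween (listAccessGraph (A ω)) (b i) (m i) (b (i + 1))).card})
    (hprob : ∀ k, s ≤ k → k ≤ t → ENNReal.ofReal p ≤ μ {ω | ∃ b m : ℕ → ℕ,
      IsPartition (A ω).length k b m ∧
      ∀ i < k, ℓ ≤ k * (edgesBetween (listAccessGraph (A ω)) (b i) (m i) (b (i + 1))).card}) :
    ENNReal.ofReal (p * ℓ / 2 * ((⌊logb 4 (t : ℝ)⌋ - ⌈logb 4 (s : ℝ)⌉ : ℤ) : ℝ))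
      ≤ ∫⁻ ω, ((A ω).length : ENNReal) ∂μ :=
  stmt_13_general μ ℓ s t p hp0 A hmeas hprob
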